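/- Unbounded defender wins form a bisimulation (from the proof of Lemma 1): Let S = (P, Act, →) be a labeled transition system and define R := {(p,q) ∈ P × P | for every initial budget e0 ∈ En_∞, the defender wins the spectroscopy energy game G△ from [p,{q}]_a with budget e0}. Then R is symmetric, and whenever (p,q) ∈ R and p →a p', there exists q' with q →a q' and (p',q') ∈ R; that is, R is a bisimulation. -/

import Mathlib

/-! ### Energies and energy updates -/

/-- (Finite) energies: vectors in `ℕ^N`. -/
abbrev Energy (N : ℕ) := Fin N → ℕ

/-- Extended energies: vectors in `(ℕ ∪ {∞})^N`. -/
abbrev EnergyE (N : ℕ) := Fin N → ℕ∞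

/-- Embedding of energies into extended energies. -/
def Energy.toE {N : ℕ} (e : Energy N) : EnergyE N := fun k => (e k : ℕ∞)

/-- A component of an energy update: `-1`, `0`, or `min_D`. -/
inductive UpdComp (N : ℕ) : Type where
  | dec : UpdComp N
  | zero : UpdComp N
  | minOf (D : Finset (Fin N)) : UpdComp N
deriving DecidableEq

/-- An energy update: a vector of update components, where a `min_D`
component at index `k` must satisfy `k ∈ D`. -/
structure EnergyUpdate (N : ℕ) : Type where
  comp : Fin N → UpdComp N
  valid : ∀ k D, comp k = UpdComp.minOf D → k ∈ D

open Classical in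
/-- Applying an energy update to an extended energy: component `k` becomes
`e k - 1`, `e k`, or `min_{d ∈ D} e d`; the result is undefined (`none`) if
some component would become negative. -/
noncomputable def applyUpdE {N : ℕ} (e : EnergyE N) (u : EnergyUpdate N) :
    Option (EnergyE N) :=
  if ∀ k, u.comp k = UpdComp.dec → e k ≠ 0 then
    some (fun k =>
      match u.comp k with
      | UpdComp.dec => e k - 1
      | UpdComp.zero => e k
      | UpdComp.minOf D => (insert k D).inf' (Finset.insert_nonempty k D) e)
  else none

open Classical in
/-- Applying an energy update to a (finite) energy. -/
noncomputable def applyUpdN {N : ℕ} (e : Energy N) (u : EnergyUpdate N) :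
    Option (Energy N) :=
  if ∀ k, u.comp k = UpdComp.dec → e k ≠ 0 then
    some (fun k =>
      match u.comp k with
      | UpdComp.dec => e k - 1
      | UpdComp.zero => e k
      | UpdComp.minOf D => (insert k D).inf' (Finset.insert_nonempty k D) e)
  else none

/-! ### Declining energy games -/

/-- A declining `N`-dimensional energy game: positions (partitioned into defender
positions and attacker positions), moves, and a weight function assigning an
energy update to each move. -/
structure EnergyGame (N : ℕ) where
  Pos : Type
  defender : Pos → Prop
  move : Pos → Pos → Prop
  weight : Pos → Pos → EnergyUpdate N

/-- The attacker wins from position `g` with (extended) initial energy budget `e`: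
inductive (attractor) characterization of the existence of an attacker winning
strategy.  (The attacker wins exactly the finite plays that get stuck at a defender
position without the energy having become negative, so the attacker has a winning
strategy iff they can force the play into a stuck defender position in finitely
many steps while keeping all energy levels defined.) -/
inductive AttackerWins {N : ℕ} (G : EnergyGame N) : G.Pos → EnergyE N → Prop where
  | attack {g g' : G.Pos} {e e' : EnergyE N} :
      ¬ G.defender g → G.move g g' →
      applyUpdE e (G.weight g g') = some e' →
      AttackerWins G g' e' → AttackerWins G g e
  | defend {g : G.Pos} {e : EnergyE N} :
      G.defender g →
      (∀ g', G.move g g' → (applyUpdE e (G.weight g g')).isSome) →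
      (∀ g' e', G.move g g' → applyUpdE e (G.weight g g') = some e' →
        AttackerWins G g' e') →
      AttackerWins G g e
/-! ### The spectroscopy energy game -/

/-- Lifting of transition steps to sets of processes:
`stepSet step Q a = {q' | ∃ q ∈ Q, q →a q'}`. -/
def stepSet {P : Type} {Act : Type} (step : P → Act → P → Prop) (Q : Set P) (a : Act) :
    Set P := {q' | ∃ q ∈ Q, step q a q'}

/-- The actions enabled initially for a process `p`: `I(p)`. -/
def enabledActs {P : Type} {Act : Type} (step : P → Act → P → Prop) (p : P) : Set Act :=
  {a | ∃ p', step p a p'}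

/-- Positions of the spectroscopy energy game: attacker positions `[p,Q]_a`,
attacker clause positions `[p,q]_a^∧`, and defender positions `(p,Q,Q*)_d`. -/
inductive SpecPos (P : Type) : Type where
  | att (p : P) (Q : Set P)
  | attConj (p q : P)
  | defp (p : P) (Q Qs : Set P)

/-- Update `(-1,0,0,0,0,0)` of observation moves. -/
def uObs : EnergyUpdate 6 :=
  ⟨![.dec, .zero, .zero, .zero, .zero, .zero], by decide⟩

/-- Update `(0,-1,0,0,0,0)` of conjunction challenges. -/
def uConj : EnergyUpdate 6 :=
  ⟨![.zero, .dec, .zero, .zero, .zero, .zero], by decide⟩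

/-- Update `(min_{1,3},0,0,0,0,0)` of conjunction revivals. -/
def uRevival : EnergyUpdate 6 :=
  ⟨![.minOf {0, 2}, .zero, .zero, .zero, .zero, .zero], by decide⟩

/-- Update `(0,0,0,min_{3,4},0,0)` of conjunction answers. -/
def uAnswer : EnergyUpdate 6 :=
  ⟨![.zero, .zero, .zero, .minOf {2, 3}, .zero, .zero], by decide⟩

/-- Update `(min_{1,4},0,0,0,0,0)` of positive decisions. -/
def uPos : EnergyUpdate 6 :=
  ⟨![.minOf {0, 3}, .zero, .zero, .zero, .zero, .zero], by decide⟩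

/-- Update `(min_{1,5},0,0,0,0,-1)` of negative decisions. -/
def uNeg : EnergyUpdate 6 :=
  ⟨![.minOf {0, 4}, .zero, .zero, .zero, .zero, .dec], by decide⟩

/-- The moves of the spectroscopy energy game `G△`. -/
inductive SpecMove {P : Type} {Act : Type} (step : P → Act → P → Prop) :
    SpecPos P → SpecPos P → Prop where
  | obs {p p' : P} {Q : Set P} {a : Act} :
      step p a p' →
      SpecMove step (.att p Q) (.att p' (stepSet step Q a))
  | conjChallenge {p : P} {Q Qs : Set P} :
      Qs ⊆ Q →
      SpecMove step (.att p Q) (.defp p (Q \ Qs) Qs)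
  | conjRevival {p : P} {Q Qs : Set P} :
      Qs ≠ ∅ →
      SpecMove step (.defp p Q Qs) (.att p Qs)
  | conjAnswer {p q : P} {Q Qs : Set P} :
      q ∈ Q →
      SpecMove step (.defp p Q Qs) (.attConj p q)
  | posDecision {p q : P} :
      SpecMove step (.attConj p q) (.att p {q})
  | negDecision {p q : P} :
      p ≠ q →
      SpecMove step (.attConj p q) (.att q {p})

/-- The moves of the clever spectroscopy game `G▲`: like `SpecMove`, with conjunction
challenges restricted to the four subsets
`∅`, `{q ∈ Q | I(q) ⊆ I(p)}`, `{q ∈ Q | I(p) ⊆ I(q)}`, `{q ∈ Q | I(p) = I(q)}`. -/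
inductive CleverMove {P : Type} {Act : Type} (step : P → Act → P → Prop) :
    SpecPos P → SpecPos P → Prop where
  | obs {p p' : P} {Q : Set P} {a : Act} :
      step p a p' →
      CleverMove step (.att p Q) (.att p' (stepSet step Q a))
  | conjChallenge {p : P} {Q Qs : Set P} :
      (Qs = ∅ ∨
       Qs = {q ∈ Q | enabledActs step q ⊆ enabledActs step p} ∨
       Qs = {q ∈ Q | enabledActs step p ⊆ enabledActs step q} ∨
       Qs = {q ∈ Q | enabledActs step p = enabledActs step q}) →
      CleverMove step (.att p Q) (.defp p (Q \ Qs) Qs)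
  | conjRevival {p : P} {Q Qs : Set P} :
      Qs ≠ ∅ →
      CleverMove step (.defp p Q Qs) (.att p Qs)
  | conjAnswer {p q : P} {Q Qs : Set P} :
      q ∈ Q →
      CleverMove step (.defp p Q Qs) (.attConj p q)
  | posDecision {p q : P} :
      CleverMove step (.attConj p q) (.att p {q})
  | negDecision {p q : P} :
      p ≠ q →
      CleverMove step (.attConj p q) (.att q {p})

open Classical in
/-- The weight function of the spectroscopy energy game (well-defined on all moves). -/
noncomputable def specWeight {P : Type} : SpecPos P → SpecPos P → EnergyUpdate 6
  | .att _ _, .att _ _ => uObs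
  | .att _ _, .defp _ _ _ => uConj
  | .defp _ _ _, .att _ _ => uRevival
  | .defp _ _ _, .attConj _ _ => uAnswer
  | .attConj p _, .att p' _ => if p = p' then uPos else uNeg
  | _, _ => uObs

/-- The spectroscopy energy game `G△` of a labeled transition system. -/
noncomputable def specGame {P : Type} {Act : Type} (step : P → Act → P → Prop) :
    EnergyGame 6 where
  Pos := SpecPos P
  defender g := ∃ p Q Qs, g = SpecPos.defp p Q Qs
  move := SpecMove step
  weight := specWeight

/-- The clever spectroscopy energy game `G▲` of a labeled transition system. -/
noncomputable def cleverGame {P : Type} {Act : Type} (step : P → Act → P → Prop) :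
    EnergyGame 6 where
  Pos := SpecPos P
  defender g := ∃ p Q Qs, g = SpecPos.defp p Q Qs
  move := CleverMove step
  weight := specWeight

section Aux

/-- Applying any update to the all-`⊤` energy yields the all-`⊤` energy. -/
lemma applyUpdE_top {N : ℕ} (u : EnergyUpdate N) :
    applyUpdE (fun _ => (⊤ : ℕ∞)) u = some (fun _ => (⊤ : ℕ∞)) := by
  unfold applyUpdE
  rw [if_pos]
  · congr 1
    funext k
    cases h : u.comp k with
    | dec => simp
    | zero => rfl
    | minOf D => exact Finset.inf'_const _ _
  · intro k _
    simp

/-- Monotonicity of update application. -/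
lemma applyUpdE_mono {N : ℕ} {e e' : EnergyE N} (h : ∀ k, e k ≤ e' k)
    (u : EnergyUpdate N) {f : EnergyE N} (hf : applyUpdE e u = some f) :
    ∃ f', applyUpdE e' u = some f' ∧ ∀ k, f k ≤ f' k := by
  unfold applyUpdE at hf ⊢
  split at hf
  · rename_i hc
    injection hf with hf
    rw [if_pos]
    · refine ⟨_, rfl, fun k => ?_⟩
      rw [← hf]
      cases hu : u.comp k with
      | dec => simp only [hu]; exact tsub_le_tsub_right (h k) 1
      | zero => simp only [hu]; exact h k
      | minOf D =>
        simp only [hu]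
        exact Finset.le_inf' _ _ fun b hb =>
          le_trans (Finset.inf'_le _ hb) (h b)
    · intro k hk hz
      exact hc k hk (le_antisymm (hz ▸ h k) zero_le)
  · exact absurd hf (by simp)

/-- Monotonicity of attacker wins in energy. -/
lemma AttackerWins.mono {N : ℕ} {G : EnergyGame N} {g : G.Pos} {e : EnergyE N}
    (h : AttackerWins G g e) :
    ∀ e' : EnergyE N, (∀ k, e k ≤ e' k) → AttackerWins G g e' := by
  induction h with
  | attack hd hm hu _ ih =>
    intro e' he
    obtain ⟨f', hf', hle⟩ := applyUpdE_mono he _ hu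
    exact .attack hd hm hf' (ih f' hle)
  | defend hd hall _ ih =>
    intro e' he
    refine .defend hd ?_ ?_
    · intro g' hm
      obtain ⟨f, hf⟩ := Option.isSome_iff_exists.mp (hall g' hm)
      obtain ⟨f', hf', -⟩ := applyUpdE_mono he _ hf
      rw [hf']; rfl
    · intro g' e'' hm hu'
      obtain ⟨f, hf⟩ := Option.isSome_iff_exists.mp (hall g' hm)
      obtain ⟨f', hf', hle⟩ := applyUpdE_mono he _ hf
      rw [hu'] at hf'
      injection hf' with hh
      exact ih g' f hm hf e'' (hh ▸ hle)

/-- Attacker wins with the top budget. -/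
def AWtop {P Act : Type} (step : P → Act → P → Prop) (g : SpecPos P) : Prop :=
  AttackerWins (specGame step) g (fun _ => (⊤ : ℕ∞))

lemma notAW_iff {P Act : Type} (step : P → Act → P → Prop) (g : SpecPos P) :
    (∀ e0 : EnergyE 6, ¬ AttackerWins (specGame step) g e0) ↔ ¬ AWtop step g := by
  constructor
  · exact fun h => h _
  · intro h e0 ha
    exact h (ha.mono _ fun k => le_top)

lemma att_not_def {P Act : Type} (step : P → Act → P → Prop) (p : P) (Q : Set P) :
    ¬ (specGame step).defender (.att p Q) := by
  rintro ⟨_, _, _, h⟩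
  cases h

lemma attConj_not_def {P Act : Type} (step : P → Act → P → Prop) (p q : P) :
    ¬ (specGame step).defender (.attConj p q) := by
  rintro ⟨_, _, _, h⟩
  cases h

end Aux

section Main

variable {P Act : Type} {step : P → Act → P → Prop}

/-- From `[p,{q}]` the attacker can reach `(p,{q},∅)_d`, then `[p,q]^∧`,
and with `p ≠ q` on to `[q,{p}]`: symmetry transfer. -/
lemma AWtop_symm {p q : P} (hne : p ≠ q)
    (h : AWtop step (SpecPos.att q {p})) : AWtop step (SpecPos.att p {q}) := by
  have s1 : AWtop step (SpecPos.attConj p q) :=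
    .attack (attConj_not_def step p q) (SpecMove.negDecision hne) (applyUpdE_top _) h
  have s2 : AWtop step (SpecPos.defp p {q} ∅) := by
    refine .defend ⟨p, {q}, ∅, rfl⟩ (fun g' _ => by rw [applyUpdE_top]; rfl) ?_
    intro g' e' hm hu
    rw [applyUpdE_top] at hu
    injection hu with hu
    subst hu
    cases hm with
    | conjRevival h0 => exact absurd rfl h0
    | conjAnswer hq =>
      rename_i q'
      have : q' = q := hq
      subst this
      exact s1
  exact .attack (att_not_def step p {q})
    (SpecMove.conjChallenge (Set.empty_subset _)) (applyUpdE_top _)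
    (show AttackerWins (specGame step) (SpecPos.defp p ({q} \ ∅) ∅) (fun _ => (⊤ : ℕ∞)) by
      rw [Set.diff_empty]; exact s2)

/-- Simulation step for the unbounded-wins relation. -/
lemma AWtop_sim {p q : P} (h : ¬ AWtop step (SpecPos.att p {q}))
    {a : Act} {p' : P} (hpa : step p a p') :
    ∃ q', step q a q' ∧ ¬ AWtop step (SpecPos.att p' {q'}) := by
  set Q' := stepSet step {q} a with hQ'def
  have hQ' : ¬ AWtop step (SpecPos.att p' Q') := fun hw =>
    h (.attack (att_not_def step p {q}) (SpecMove.obs hpa) (applyUpdE_top _) hw)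
  by_contra hcon
  push_neg at hcon
  apply hQ'
  have s2 : AWtop step (SpecPos.defp p' Q' ∅) := by
    refine .defend ⟨p', Q', ∅, rfl⟩ (fun g' _ => by rw [applyUpdE_top]; rfl) ?_
    intro g' e' hm hu
    rw [applyUpdE_top] at hu
    injection hu with hu
    subst hu
    cases hm with
    | conjRevival h0 => exact absurd rfl h0
    | conjAnswer hq =>
      rename_i q'
      obtain ⟨x, hx, hs⟩ := hq
      have hx' : x = q := hx
      subst hx'
      exact .attack (attConj_not_def step p' q') SpecMove.posDecision
        (applyUpdE_top _) (hcon q' hs)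
  exact .attack (att_not_def step p' Q')
    (SpecMove.conjChallenge (Set.empty_subset _)) (applyUpdE_top _)
    (show AttackerWins (specGame step) (SpecPos.defp p' (Q' \ ∅) ∅) (fun _ => (⊤ : ℕ∞)) by
      rw [Set.diff_empty]; exact s2)

end Main

/-- **Unbounded defender wins form a bisimulation** (from the proof of Lemma 1):
the relation `R = {(p,q) | the defender wins G△ from [p,{q}]_a for every budget}`
is symmetric and has the simulation property. -/
theorem unbounded_defender_wins_bisimulation {P Act : Type}
    (step : P → Act → P → Prop) :
    (∀ p q : P,
      (∀ e0 : EnergyE 6, ¬ AttackerWins (specGame step) (SpecPos.att p {q}) e0) →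
      (∀ e0 : EnergyE 6, ¬ AttackerWins (specGame step) (SpecPos.att q {p}) e0)) ∧
    (∀ p q : P,
      (∀ e0 : EnergyE 6, ¬ AttackerWins (specGame step) (SpecPos.att p {q}) e0) →
      ∀ a p', step p a p' →
        ∃ q', step q a q' ∧
          ∀ e0 : EnergyE 6,
            ¬ AttackerWins (specGame step) (SpecPos.att p' {q'}) e0) := by
  constructor
  · intro p q h
    rw [notAW_iff] at h ⊢
    rcases eq_or_ne p q with rfl | hne
    · exact h
    · exact fun hw => h (AWtop_symm hne hw)
  · intro p q h a p' hpa
    rw [notAW_iff] at h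
    obtain ⟨q', hq', hnw⟩ := AWtop_sim h hpa
    exact ⟨q', hq', (notAW_iff step _).mpr hnw⟩
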